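/- For the expansion ∏ i x_i = ∑_S (∏_{i∈S} δ_i)(∏_{i∉S} a_i), if each party p holds additive shares of every cross-term ∏_{i∉S} a_i and knows the public values δ_i, then the pointwise combination ∑_S (∏_{i∈S} δ_i) · ⟦∏_{i∉S} a_i⟧_p, with the S = Fin n term's constant ∏_i δ_i added by a single designated party, sums over parties to ∏ i x_i. -/

import Mathlib

theorem multivariate_beaver_shares_correct {P : Type*} [Fintype P] [DecidableEq P] (Q : ℕ)
    (n : ℕ) (x a : Fin n → ZMod Q) (δ : Fin n → ZMod Q)
    (hδ : ∀ i, δ i = x i - a i)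
    (ashare : Finset (Fin n) → P → ZMod Q)
    (hashare : ∀ S : Finset (Fin n), ∑ p, ashare S p = ∏ i ∈ Sᶜ, a i)
    (p₀ : P) :
    ∑ p, ((∑ S ∈ (Finset.univ : Finset (Finset (Fin n))).erase Finset.univ,
            (∏ i ∈ S, δ i) * ashare S p) +
          if p = p₀ then ∏ i, δ i else 0) = ∏ i, x i := by
  have hx : ∀ i, x i = δ i + a i := by intro i; rw [hδ]; ring
  rw [Finset.sum_add_distrib, Finset.sum_ite_eq' Finset.univ p₀, if_pos (Finset.mem_univ p₀),
    Finset.sum_comm]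
  simp_rw [← Finset.mul_sum, hashare]
  have hexp : ∏ i, x i = ∑ S : Finset (Fin n), (∏ i ∈ S, δ i) * ∏ i ∈ Sᶜ, a i := by
    simp_rw [hx]
    rw [Finset.prod_add]
    exact Finset.sum_congr rfl fun S _ => by rw [Finset.compl_eq_univ_sdiff]
  rw [hexp, ← Finset.add_sum_erase _ _ (Finset.mem_univ Finset.univ), add_comm]
  simp
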